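/- Let d, k ≥ 1, let K ⊆ ℝ^d be compact, and let g : ℝ^d → ℝ be bounded and measurable. Define W_g(c) = ∫_K min_{j=1,…,k} ‖x − c_j‖² g(x) dx for c = (c_1,…,c_k) ∈ (ℝ^d)^k. Suppose c has pairwise distinct centers and ∫_{V_j(c) ∩ K} g(x) dx ≠ 0 for every j ∈ {1,…,k}. Then the directional derivative of W_g at c along every canonical basis direction of (ℝ^d)^k vanishes if and only if for every j, c_j = (∫_{V_j(c) ∩ K} x g(x) dx) / (∫_{V_j(c) ∩ K} g(x) dx). -/

import Mathlib

/-!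
Off the bisector hyperplanes of pairs of distinct centres, a Lebesgue-null set, every point `x`
has a unique nearest centre `c_i`. Moving `c_j` along `e`, the integrand
`t ↦ min_u ‖x - (c + t • single j e)_u‖²` then agrees near `t = 0` with the squared distance to
`c_i` alone, so its derivative at `0` is `-2 ⟪x - c_j, e⟫` on `V_j(c)` and `0` off it. Its
increments are `O(|t|)` uniformly for `x` in the compact `K`, so one may differentiate under the
integral: the derivative of `W_g` along `single j e` is
`-2 ⟪∫_{V_j ∩ K} g(x) x dx - (∫_{V_j ∩ K} g) c_j, e⟫`. It vanishes for every `e = e_ℓ` iff the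
bracket is zero, i.e. (the mass being nonzero) iff `c_j` is the centroid.
-/

open MeasureTheory

/-- The Voronoi cell of index `j` for the codebook `c`. -/
def voronoiCell {d k : ℕ} (c : Fin k → EuclideanSpace ℝ (Fin d)) (j : Fin k) :
    Set (EuclideanSpace ℝ (Fin d)) :=
  {x | ∀ u : Fin k, ‖x - c j‖ ≤ ‖x - c u‖}

open Filter Topology Function
open scoped RealInnerProductSpace

theorem abs_ciInf_sub_ciInf_le {ι : Type*} [Finite ι] [Nonempty ι] {a b : ι → ℝ} {B : ℝ}
    (h : ∀ i, |a i - b i| ≤ B) : |(⨅ i, a i) - ⨅ i, b i| ≤ B := by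
  have hinf (f : ι → ℝ) (i : ι) : ⨅ i, f i ≤ f i := ciInf_le (Set.finite_range f).bddBelow i
  have hab : (⨅ i, a i) - B ≤ ⨅ i, b i :=
    le_ciInf fun i => by linarith [hinf a i, (abs_le.1 (h i)).2]
  have hba : (⨅ i, b i) - B ≤ ⨅ i, a i :=
    le_ciInf fun i => by linarith [hinf b i, (abs_le.1 (h i)).1]
  rw [abs_sub_le_iff]
  constructor <;> linarith

theorem HasDerivAt.ciInf_of_forall_lt {ι : Type*} [Finite ι] {f : ι → ℝ → ℝ} {i₀ : ι}
    {f' t₀ : ℝ} (hf : HasDerivAt (f i₀) f' t₀) (hcont : ∀ i, ContinuousAt (f i) t₀)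
    (hlt : ∀ i ≠ i₀, f i₀ t₀ < f i t₀) : HasDerivAt (fun t => ⨅ i, f i t) f' t₀ := by
  have : Nonempty ι := ⟨i₀⟩
  have hmin : ∀ᶠ t in 𝓝 t₀, ∀ i, f i₀ t ≤ f i t := eventually_all.2 fun i => by
    rcases eq_or_ne i i₀ with rfl | hi
    · exact .of_forall fun _ => le_rfl
    · exact ((hcont i₀).eventually_lt (hcont i) (hlt i hi)).mono fun _ h => h.le
  refine hf.congr_of_eventuallyEq ?_
  filter_upwards [hmin] with t ht
  exact le_antisymm (ciInf_le (Set.finite_range _).bddBelow i₀) (le_ciInf ht)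

theorem hasDerivAt_integral_of_dominated_loc_of_lip' {α 𝕜 E : Type*} [MeasurableSpace α]
    {μ : Measure α} [RCLike 𝕜] [NormedAddCommGroup E] [NormedSpace ℝ E] [NormedSpace 𝕜 E]
    [CompleteSpace E] {F : 𝕜 → α → E} {F' : α → E} {x₀ : 𝕜} {s : Set 𝕜} {bound : α → ℝ} (hs : s ∈ 𝓝 x₀)
    (hF_meas : ∀ x ∈ s, AEStronglyMeasurable (F x) μ) (hF_int : Integrable (F x₀) μ)
    (hF'_meas : AEStronglyMeasurable F' μ)
    (h_lipsch : ∀ᵐ a ∂μ, ∀ x ∈ s, ‖F x a - F x₀ a‖ ≤ bound a * ‖x - x₀‖)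
    (bound_integrable : Integrable bound μ)
    (h_diff : ∀ᵐ a ∂μ, HasDerivAt (F · a) (F' a) x₀) :
    HasDerivAt (fun x => ∫ a, F x a ∂μ) (∫ a, F' a ∂μ) x₀ := by
  set L : E →L[𝕜] 𝕜 →L[𝕜] E := ContinuousLinearMap.smulRightL 𝕜 𝕜 E 1
  have hm : AEStronglyMeasurable (L ∘ F') μ := L.continuous.comp_aestronglyMeasurable hF'_meas
  obtain ⟨hLF'_int, key⟩ := hasFDerivAt_integral_of_dominated_loc_of_lip' hs hF_meas hF_int hm
    h_lipsch bound_integrable (h_diff.mono fun _ ha => ha.hasFDerivAt)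
  have hF'_int : Integrable F' μ := by
    rw [← integrable_norm_iff hm] at hLF'_int
    simpa [L, Function.comp_def, integrable_norm_iff hF'_meas] using! hLF'_int
  rw [hasDerivAt_iff_hasFDerivAt]
  simpa only [Function.comp_def, ContinuousLinearMap.integral_comp_comm _ hF'_int] using! key

section InnerProductSpace

variable {F : Type*} [NormedAddCommGroup F] [InnerProductSpace ℝ F]

theorem hasDerivAt_norm_sub_add_smul_sq (x y v : F) :
    HasDerivAt (fun t : ℝ => ‖x - (y + t • v)‖ ^ 2) (-2 * ⟪x - y, v⟫) 0 := by
  simpa using (((hasDerivAt_id (0 : ℝ)).smul_const v).const_add y).const_sub x |>.norm_sq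

theorem abs_norm_sub_add_smul_sq_sub_le (x y v : F) {t : ℝ} (ht : |t| ≤ 1) :
    |‖x - (y + t • v)‖ ^ 2 - ‖x - y‖ ^ 2| ≤ (2 * ‖x - y‖ * ‖v‖ + ‖v‖ ^ 2) * |t| := by
  have hexp : ‖x - (y + t • v)‖ ^ 2 - ‖x - y‖ ^ 2 = t * (t * ‖v‖ ^ 2 - 2 * ⟪x - y, v⟫) := by
    rw [← sub_sub, norm_sub_sq_real, real_inner_smul_right, norm_smul, Real.norm_eq_abs, mul_pow,
      sq_abs]
    ring
  have hinner : |⟪x - y, v⟫| ≤ ‖x - y‖ * ‖v‖ := abs_real_inner_le_norm _ _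
  have htv : |t * ‖v‖ ^ 2| ≤ ‖v‖ ^ 2 := by
    rw [abs_mul, abs_of_nonneg (sq_nonneg ‖v‖)]
    exact mul_le_of_le_one_left (sq_nonneg _) ht
  rw [hexp, abs_mul, mul_comm]
  gcongr
  calc |t * ‖v‖ ^ 2 - 2 * ⟪x - y, v⟫| ≤ |t * ‖v‖ ^ 2| + |2 * ⟪x - y, v⟫| := abs_sub _ _
    _ ≤ 2 * ‖x - y‖ * ‖v‖ + ‖v‖ ^ 2 := by rw [abs_mul 2, abs_two]; linarith

variable [MeasurableSpace F]

theorem integral_inner_sub_mul {μ : Measure F} [CompleteSpace F] {g : F → ℝ} (hg : Integrable g μ)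
    (hgx : Integrable (fun x => g x • x) μ) (y e : F) :
    ∫ x, ⟪x - y, e⟫ * g x ∂μ = ⟪(∫ x, g x • x ∂μ) - (∫ x, g x ∂μ) • y, e⟫ := by
  have hpt (x : F) : ⟪x - y, e⟫ * g x = ⟪e, g x • x - g x • y⟫ := by
    rw [← smul_sub, real_inner_smul_right, real_inner_comm]; ring
  simp_rw [hpt]
  have hint : Integrable (fun x => g x • x - g x • y) μ := hgx.sub (hg.smul_const y)
  rw [integral_inner hint, integral_sub hgx (hg.smul_const y), integral_smul_const,
    real_inner_comm]

variable [BorelSpace F] [FiniteDimensional ℝ F] (μ : Measure F) [μ.IsAddHaarMeasure]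

theorem measure_setOf_norm_sub_eq_norm_sub {a b : F} (hab : a ≠ b) :
    μ {x | ‖x - a‖ = ‖x - b‖} = 0 := by
  have : {x | ‖x - a‖ = ‖x - b‖} = (AffineSubspace.perpBisector a b : Set F) := by
    ext x
    simp [AffineSubspace.mem_perpBisector_iff_dist_eq', dist_eq_norm, norm_sub_rev x]
  rw [this]
  exact Measure.addHaar_affineSubspace _ _ (by simpa using hab)

theorem ae_injective_norm_sub {ι : Type*} [Countable ι] {c : ι → F} (hc : Injective c) :
    ∀ᵐ x ∂μ, Injective fun u => ‖x - c u‖ := by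
  have (u v : ι) : ∀ᵐ x ∂μ, ‖x - c u‖ = ‖x - c v‖ → u = v := by
    rcases eq_or_ne u v with rfl | huv
    · exact .of_forall fun _ _ => rfl
    · filter_upwards [measure_eq_zero_iff_ae_notMem.1
        (measure_setOf_norm_sub_eq_norm_sub μ (hc.ne huv))] with x hx h
      exact absurd h hx
  simpa only [Injective, ae_all_iff] using this

end InnerProductSpace

section Distortion

variable {d k : ℕ}

local notation "E" => EuclideanSpace ℝ (Fin d)

theorem isClosed_voronoiCell (c : Fin k → E) (j : Fin k) : IsClosed (voronoiCell c j) := by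
  simp only [voronoiCell, Set.ofPred_forall]
  exact isClosed_iInter fun u => isClosed_le (by fun_prop) (by fun_prop)

theorem abs_iInf_norm_sub_sq_le (c : Fin k → E) (j : Fin k) (x : E) :
    |⨅ u, ‖x - c u‖ ^ 2| ≤ ‖x - c j‖ ^ 2 := by
  have : Nonempty (Fin k) := ⟨j⟩
  rw [abs_of_nonneg (le_ciInf fun _ => sq_nonneg _)]
  exact ciInf_le (Set.finite_range _).bddBelow j

theorem abs_iInf_norm_sub_add_smul_single_sq_sub_le (c : Fin k → E) (j : Fin k) (e x : E)
    {t : ℝ} (ht : |t| ≤ 1) :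
    |(⨅ u, ‖x - (c + t • (Pi.single j e : Fin k → E)) u‖ ^ 2) - ⨅ u, ‖x - c u‖ ^ 2|
      ≤ (2 * ‖x - c j‖ * ‖e‖ + ‖e‖ ^ 2) * |t| := by
  have : Nonempty (Fin k) := ⟨j⟩
  refine abs_ciInf_sub_ciInf_le fun u => ?_
  rcases eq_or_ne u j with rfl | hu
  · simpa using abs_norm_sub_add_smul_sq_sub_le x (c u) e ht
  · simp only [Pi.add_apply, Pi.smul_apply, Pi.single_eq_of_ne hu, smul_zero, add_zero, sub_self,
      abs_zero]
    positivity

theorem hasDerivAt_iInf_norm_sub_add_smul_single_sq {c : Fin k → E} {x : E}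
    (hx : Injective fun u => ‖x - c u‖) (j : Fin k) (e : E) :
    HasDerivAt (fun t : ℝ => ⨅ u, ‖x - (c + t • (Pi.single j e : Fin k → E)) u‖ ^ 2)
      ((voronoiCell c j).indicator (fun y => -2 * ⟪y - c j, e⟫) x) 0 := by
  have : Nonempty (Fin k) := ⟨j⟩
  obtain ⟨i, hi⟩ := Finite.exists_min fun u => ‖x - c u‖
  have hderiv (u : Fin k) := hasDerivAt_norm_sub_add_smul_sq x (c u) ((Pi.single j e : Fin k → E) u)
  have key : HasDerivAt (fun t : ℝ => ⨅ u, ‖x - (c + t • (Pi.single j e : Fin k → E)) u‖ ^ 2)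
      (-2 * ⟪x - c i, (Pi.single j e : Fin k → E) i⟫) 0 := by
    refine (hderiv i).ciInf_of_forall_lt (fun u => (hderiv u).continuousAt) fun u hu => ?_
    simp only [zero_smul, add_zero]
    gcongr
    exact (hi u).lt_of_ne fun h => hu (hx h).symm
  rcases eq_or_ne i j with rfl | hij
  · rw [Set.indicator_of_mem (show x ∈ voronoiCell c i from hi)]
    rwa [Pi.single_eq_same] at key
  · have hxj : x ∉ voronoiCell c j := fun hxj => hij (hx ((hi j).antisymm (hxj i)))
    rw [Set.indicator_of_notMem hxj]
    rwa [Pi.single_eq_of_ne hij, inner_zero_right, mul_zero] at key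

theorem hasDerivAt_distortion_add_smul_single {K : Set E} (hK : IsCompact K) {g : E → ℝ} {M : ℝ}
    (hgM : ∀ x, |g x| ≤ M) (hg : Measurable g) {c : Fin k → E} (hc : Injective c) (j : Fin k)
    (e : E) :
    HasDerivAt
      (fun t : ℝ => ∫ x in K, (⨅ u, ‖x - (c + t • (Pi.single j e : Fin k → E)) u‖ ^ 2) * g x)
      (-2 * ⟪(∫ x in voronoiCell c j ∩ K, g x • x) - (∫ x in voronoiCell c j ∩ K, g x) • c j, e⟫)
      0 := by
  have hV : MeasurableSet (voronoiCell c j) := (isClosed_voronoiCell c j).measurableSet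
  have hcont {φ : E → ℝ} (hφ : Continuous φ) : IntegrableOn φ K :=
    hφ.continuousOn.integrableOn_compact hK
  have hint_dist : IntegrableOn (fun x => (⨅ u, ‖x - c u‖ ^ 2) * g x) K :=
    (hcont (φ := fun x => ‖x - c j‖ ^ 2 * M) (by fun_prop)).mono' (by fun_prop) <|
      .of_forall fun x => by
        rw [norm_mul, Real.norm_eq_abs, Real.norm_eq_abs]
        exact mul_le_mul (abs_iInf_norm_sub_sq_le c j x) (hgM x) (abs_nonneg _) (sq_nonneg _)
  have hint_g : IntegrableOn g K :=
    (hcont continuous_const).mono' hg.aestronglyMeasurable (.of_forall hgM)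
  have hint_gx : IntegrableOn (fun x => g x • x) K :=
    (hcont (φ := fun x => M * ‖x‖) (by fun_prop)).mono' (by fun_prop) <| .of_forall fun x => by
      rw [norm_smul, Real.norm_eq_abs]
      exact mul_le_mul_of_nonneg_right (hgM x) (norm_nonneg x)
  refine (hasDerivAt_integral_of_dominated_loc_of_lip' (μ := volume.restrict K)
    (F := fun (t : ℝ) x => (⨅ u, ‖x - (c + t • (Pi.single j e : Fin k → E)) u‖ ^ 2) * g x)
    (F' := (voronoiCell c j).indicator fun x => -2 * ⟪x - c j, e⟫ * g x)
    (bound := fun x => (2 * ‖x - c j‖ * ‖e‖ + ‖e‖ ^ 2) * M)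
    (Metric.ball_mem_nhds 0 one_pos) (fun _ _ => by fun_prop) (by simpa using hint_dist.integrable)
    ((Measurable.indicator (by fun_prop) hV).aestronglyMeasurable) ?_ (hcont (by fun_prop))
    ?_).congr_deriv ?_
  · refine .of_forall fun x t ht => ?_
    have ht1 : |t| ≤ 1 := by simpa using (mem_ball_zero_iff.1 ht).le
    simp only [zero_smul, add_zero, sub_zero, ← sub_mul, norm_mul, Real.norm_eq_abs]
    calc _ ≤ (2 * ‖x - c j‖ * ‖e‖ + ‖e‖ ^ 2) * |t| * M :=
          mul_le_mul (abs_iInf_norm_sub_add_smul_single_sq_sub_le c j e x ht1) (hgM x)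
            (abs_nonneg _) (by positivity)
      _ = _ := by ring
  · filter_upwards [ae_restrict_of_ae (ae_injective_norm_sub volume hc)] with x hx
    simpa only [Set.indicator_mul_left] using
      (hasDerivAt_iInf_norm_sub_add_smul_single_sq hx j e).mul_const (g x)
  · simp_rw [setIntegral_indicator hV, Set.inter_comm K, mul_assoc]
    rw [integral_const_mul, integral_inner_sub_mul (hint_g.mono_set Set.inter_subset_right)
      (hint_gx.mono_set Set.inter_subset_right)]

end Distortion

theorem first_order_conditions_iff_centroids_general
    (d k : ℕ)
    (K : Set (EuclideanSpace ℝ (Fin d))) (hK : IsCompact K)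
    (g : EuclideanSpace ℝ (Fin d) → ℝ)
    (hg_bdd : ∃ M : ℝ, ∀ x, |g x| ≤ M) (hg_meas : Measurable g)
    (W : (Fin k → EuclideanSpace ℝ (Fin d)) → ℝ)
    (hW : W = fun c => ∫ x in K, (⨅ j : Fin k, ‖x - c j‖ ^ 2) * g x)
    (c : Fin k → EuclideanSpace ℝ (Fin d))
    (hc : Function.Injective c)
    (hmass : ∀ j : Fin k, (∫ x in voronoiCell c j ∩ K, g x) ≠ 0) :
    (∀ (j : Fin k) (ℓ : Fin d),
        Filter.Tendsto
          (fun h : ℝ =>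
            (W (c + h • (Pi.single j (EuclideanSpace.single ℓ (1 : ℝ)) : Fin k → EuclideanSpace ℝ (Fin d))) - W c) / h)
          (nhdsWithin 0 {0}ᶜ) (nhds 0)) ↔
      ∀ j : Fin k,
        c j = (∫ x in voronoiCell c j ∩ K, g x)⁻¹ •
          ∫ x in voronoiCell c j ∩ K, g x • x := by
  obtain ⟨M, hM⟩ := hg_bdd
  have hslope (j : Fin k) (ℓ : Fin d) : Tendsto
      (fun h : ℝ => (W (c + h • (Pi.single j (EuclideanSpace.single ℓ (1 : ℝ)) :
        Fin k → EuclideanSpace ℝ (Fin d))) - W c) / h)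
      (𝓝[≠] 0) (𝓝 (-2 * ((∫ x in voronoiCell c j ∩ K, g x • x) -
        (∫ x in voronoiCell c j ∩ K, g x) • c j) ℓ)) := by
    subst hW
    simpa [div_eq_inv_mul, EuclideanSpace.inner_single_right] using
      (hasDerivAt_distortion_add_smul_single hK hM hg_meas hc j
        (EuclideanSpace.single ℓ 1)).tendsto_slope_zero
  have hcentroid (j : Fin k) : c j = (∫ x in voronoiCell c j ∩ K, g x)⁻¹ •
        ∫ x in voronoiCell c j ∩ K, g x • x ↔
      (∫ x in voronoiCell c j ∩ K, g x • x) - (∫ x in voronoiCell c j ∩ K, g x) • c j = 0 := by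
    rw [eq_inv_smul_iff₀ (hmass j), sub_eq_zero, eq_comm]
  simp_rw [hcentroid]
  constructor
  · intro H j
    ext ℓ
    simpa using tendsto_nhds_unique (hslope j ℓ) (H j ℓ)
  · intro H j ℓ
    simpa [H] using hslope j ℓ

/-- For bounded measurable `g`, a codebook `c` with pairwise distinct centers
and nonvanishing masses `∫_{V_j(c) ∩ K} g ≠ 0`, the directional derivatives of the weighted
distortion at `c` along all canonical basis directions vanish iff each `c_j` is the
`g`-weighted centroid of its Voronoi cell (intersected with `K`). -/
theorem first_order_conditions_iff_centroids
    (d k : ℕ) (hd : 1 ≤ d) (hk : 1 ≤ k)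
    (K : Set (EuclideanSpace ℝ (Fin d))) (hK : IsCompact K)
    (g : EuclideanSpace ℝ (Fin d) → ℝ)
    (hg_bdd : ∃ M : ℝ, ∀ x, |g x| ≤ M) (hg_meas : Measurable g)
    (W : (Fin k → EuclideanSpace ℝ (Fin d)) → ℝ)
    (hW : W = fun c => ∫ x in K, (⨅ j : Fin k, ‖x - c j‖ ^ 2) * g x)
    (c : Fin k → EuclideanSpace ℝ (Fin d))
    (hc : Function.Injective c)
    (hmass : ∀ j : Fin k, (∫ x in voronoiCell c j ∩ K, g x) ≠ 0) :
    (∀ (j : Fin k) (ℓ : Fin d),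
        Filter.Tendsto
          (fun h : ℝ =>
            (W (c + h • (Pi.single j (EuclideanSpace.single ℓ (1 : ℝ)) : Fin k → EuclideanSpace ℝ (Fin d))) - W c) / h)
          (nhdsWithin 0 {0}ᶜ) (nhds 0)) ↔
      ∀ j : Fin k,
        c j = (∫ x in voronoiCell c j ∩ K, g x)⁻¹ •
          ∫ x in voronoiCell c j ∩ K, g x • x :=
  first_order_conditions_iff_centroids_general d k K hK g hg_bdd hg_meas W hW c hc hmass
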